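/- arXiv:2405.19016 — 2 statements merged into one kernel-verified Lean document; each statement's English description precedes it below -/
import Mathlib

section
/- Let p and p0 be the densities of the Gaussian distributions N(μ, σ²) and N(μ0, σ0²) respectively (σ, σ0 > 0). Then the variance under N(μ0, σ0²) of the log-likelihood ratio satisfies Var_{p0}( log(p0/p) ) = σ0²(μ0 − μ)²/σ⁴ + (σ² − σ0²)²/(2σ⁴). -/
open MeasureTheory ProbabilityTheory Real

noncomputable section

/-- Density of the normal distribution `N(m, σ²)` at `y` (with standard deviation `σ`). -/
def gaussPDF (m σ y : ℝ) : ℝ :=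
  Real.exp (-(y - m) ^ 2 / (2 * σ ^ 2)) / (σ * Real.sqrt (2 * Real.pi))

/-
With `X = U - μ0 ~ N(0, σ0²)`, the log-likelihood ratio `log (p0/p)` is the quadratic
`a X² + b X + c` with `a = 1/(2σ²) - 1/(2σ0²)` and `b = (μ0 - μ)/σ²`. For a centred Gaussian
`X ~ N(0, v)`, `X²` and `X` are uncorrelated (odd symmetry) and `Var X² = E X⁴ - v² = 2v²`, the
fourth moment `3v²` being read off the moment generating function `exp (v t² / 2)`. Hence
`Var (a X² + b X + c) = 2 a² v² + b² v`.
-/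

open scoped NNReal

lemma deriv_mul_exp_mul_sq_div_two {P P' Q : ℝ → ℝ} (c : ℝ) (hP : ∀ t, HasDerivAt P (P' t) t)
    (hQ : ∀ t, P' t + c * t * P t = Q t) :
    deriv (fun t ↦ P t * rexp (c * t ^ 2 / 2)) = fun t ↦ Q t * rexp (c * t ^ 2 / 2) := by
  ext t
  have hq : HasDerivAt (fun t : ℝ ↦ c * t ^ 2 / 2) (c * t) t :=
    (((hasDerivAt_pow 2 t).const_mul c).div_const 2).congr_deriv (by ring)
  exact ((hP t).mul hq.exp).deriv.trans (by rw [← hQ]; ring)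

lemma iteratedDeriv_four_exp_mul_sq_div_two (c : ℝ) :
    iteratedDeriv 4 (fun t ↦ rexp (c * t ^ 2 / 2)) 0 = 3 * c ^ 2 := by
  have h1 := deriv_mul_exp_mul_sq_div_two c (P := fun _ ↦ 1) (Q := fun t ↦ c * t)
    (fun t ↦ hasDerivAt_const t 1) (fun t ↦ by ring)
  have h2 := deriv_mul_exp_mul_sq_div_two c (P := fun t ↦ c * t)
    (Q := fun t ↦ c + c ^ 2 * t ^ 2) (fun t ↦ (hasDerivAt_id t).const_mul c) (fun t ↦ by simp; ring)
  have h3 := deriv_mul_exp_mul_sq_div_two c (P := fun t ↦ c + c ^ 2 * t ^ 2)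
    (Q := fun t ↦ 3 * c ^ 2 * t + c ^ 3 * t ^ 3)
    (fun t ↦ ((hasDerivAt_pow 2 t).const_mul (c ^ 2)).const_add c) (fun t ↦ by simp; ring)
  have h4 := deriv_mul_exp_mul_sq_div_two c (P := fun t ↦ 3 * c ^ 2 * t + c ^ 3 * t ^ 3)
    (Q := fun t ↦ 3 * c ^ 2 + 6 * c ^ 3 * t ^ 2 + c ^ 4 * t ^ 4)
    (fun t ↦ ((hasDerivAt_id t).const_mul (3 * c ^ 2)).add ((hasDerivAt_pow 3 t).const_mul (c ^ 3)))
    (fun t ↦ by simp; ring)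
  simp only [one_mul] at h1
  rw [iteratedDeriv_succ', iteratedDeriv_succ', iteratedDeriv_succ', iteratedDeriv_one,
    h1, h2, h3, h4]
  simp

namespace ProbabilityTheory

variable {v : ℝ≥0}

lemma integrable_pow_gaussianReal {μ : ℝ} (n : ℕ) :
    Integrable (fun x ↦ x ^ n) (gaussianReal μ v) :=
  integrable_pow_of_mem_interior_integrableExpSet (by simp) n

lemma memLp_pow_gaussianReal {μ : ℝ} (n : ℕ) : MemLp (fun x ↦ x ^ n) 2 (gaussianReal μ v) := by
  refine (memLp_two_iff_integrable_sq (by fun_prop)).2 ?_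
  simpa [← pow_mul] using integrable_pow_gaussianReal (μ := μ) (v := v) (n * 2)

lemma integral_eq_zero_of_odd_gaussianReal {f : ℝ → ℝ} (hf : ∀ x, f (-x) = -f x) :
    ∫ x, f x ∂gaussianReal 0 v = 0 := by
  have h := measurableEmbedding_neg.integral_map (μ := gaussianReal 0 v) f
  simp only [gaussianReal_map_neg, neg_zero, hf, integral_neg] at h
  linarith

lemma integral_sq_gaussianReal_zero : ∫ x, x ^ 2 ∂gaussianReal 0 v = v := by
  have h := variance_id_gaussianReal (μ := 0) (v := v)
  rw [variance_eq_sub (memLp_id_gaussianReal' 2 (by simp))] at h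
  simpa using h

lemma integral_pow_four_gaussianReal_zero : ∫ x, x ^ 4 ∂gaussianReal 0 v = 3 * (v : ℝ) ^ 2 := by
  have h := iteratedDeriv_mgf_zero (X := fun x ↦ x) (μ := gaussianReal 0 v) (by simp) 4
  simp only [mgf_fun_id_gaussianReal, zero_mul, zero_add,
    iteratedDeriv_four_exp_mul_sq_div_two] at h
  simpa using h.symm

lemma variance_sq_gaussianReal_zero : Var[fun x ↦ x ^ 2; gaussianReal 0 v] = 2 * (v : ℝ) ^ 2 := by
  rw [variance_eq_sub (memLp_pow_gaussianReal 2)]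
  simp only [Pi.pow_apply, ← pow_mul]
  rw [integral_pow_four_gaussianReal_zero, integral_sq_gaussianReal_zero]
  ring

lemma covariance_sq_id_gaussianReal_zero : cov[fun x ↦ x ^ 2, fun x ↦ x; gaussianReal 0 v] = 0 := by
  rw [covariance, integral_id_gaussianReal]
  exact integral_eq_zero_of_odd_gaussianReal fun x ↦ by ring

lemma variance_quadratic_gaussianReal_zero (a b c : ℝ) :
    Var[fun x ↦ a * x ^ 2 + b * x + c; gaussianReal 0 v] = 2 * a ^ 2 * v ^ 2 + b ^ 2 * v := by
  rw [variance_add_const (by fun_prop),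
    variance_fun_add ((memLp_pow_gaussianReal 2).const_mul a)
      ((show MemLp (fun x : ℝ ↦ x) 2 (gaussianReal 0 v) from
        memLp_id_gaussianReal' 2 (by simp)).const_mul b),
    variance_const_mul, variance_const_mul, covariance_const_mul_left,
    covariance_const_mul_right, variance_sq_gaussianReal_zero, covariance_sq_id_gaussianReal_zero,
    variance_fun_id_gaussianReal]
  ring

lemma variance_quadratic_gaussianReal (μ a b c : ℝ) :
    Var[fun x ↦ a * (x - μ) ^ 2 + b * (x - μ) + c; gaussianReal μ v]
      = 2 * a ^ 2 * v ^ 2 + b ^ 2 * v := by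
  have hmap : (gaussianReal 0 v).map (· + μ) = gaussianReal μ v := by
    simpa using gaussianReal_map_add_const (μ := 0) (v := v) μ
  rw [← hmap, variance_map (by fun_prop) (by fun_prop)]
  simpa [Function.comp_def] using variance_quadratic_gaussianReal_zero a b c

end ProbabilityTheory

lemma log_gaussPDF_div_gaussPDF {m₀ m s₀ s : ℝ} (hs₀ : s₀ ≠ 0) (hs : s ≠ 0) (u : ℝ) :
    log (gaussPDF m₀ s₀ u / gaussPDF m s u)
      = log (s / s₀) + (u - m) ^ 2 / (2 * s ^ 2) - (u - m₀) ^ 2 / (2 * s₀ ^ 2) := by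
  have hk : √(2 * π) ≠ 0 := by positivity
  have hk₀ : s₀ * √(2 * π) ≠ 0 := mul_ne_zero hs₀ hk
  have hk₁ : s * √(2 * π) ≠ 0 := mul_ne_zero hs hk
  rw [gaussPDF, gaussPDF, log_div (div_ne_zero (exp_ne_zero _) hk₀) (div_ne_zero (exp_ne_zero _) hk₁),
    log_div (exp_ne_zero _) hk₀, log_div (exp_ne_zero _) hk₁, log_exp, log_exp,
    log_mul hs₀ hk, log_mul hs hk, log_div hs hs₀]
  ring

/-- Lemma `lm_boundfor_variance_KL`: if `p`, `p0` are the densities of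
`N(μ, σ²)` and `N(μ0, σ0²)`, then
`Var_{p0}(log (p0/p)) = σ0²(μ0-μ)²/σ⁴ + (σ²-σ0²)²/(2σ⁴)`. -/
theorem statement_13 (μ μ0 σ σ0 : ℝ) (hσ : 0 < σ) (hσ0 : 0 < σ0) :
    variance (fun u => Real.log (gaussPDF μ0 σ0 u / gaussPDF μ σ u))
        (gaussianReal μ0 (σ0 ^ 2).toNNReal)
      = σ0 ^ 2 * (μ0 - μ) ^ 2 / σ ^ 4 + (σ ^ 2 - σ0 ^ 2) ^ 2 / (2 * σ ^ 4) := by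
  have hv : ((σ0 ^ 2).toNNReal : ℝ) = σ0 ^ 2 := Real.coe_toNNReal _ (sq_nonneg σ0)
  have hlog : (fun u ↦ log (gaussPDF μ0 σ0 u / gaussPDF μ σ u))
      = fun u ↦ (1 / (2 * σ ^ 2) - 1 / (2 * σ0 ^ 2)) * (u - μ0) ^ 2
        + (μ0 - μ) / σ ^ 2 * (u - μ0) + (log (σ / σ0) + (μ0 - μ) ^ 2 / (2 * σ ^ 2)) := by
    ext u
    rw [log_gaussPDF_div_gaussPDF hσ0.ne' hσ.ne']
    ring
  rw [hlog, variance_quadratic_gaussianReal, hv]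
  field_simp
  ring
end
end

section
/- Let ε ∈ (0, 1/2) and set β = 8·log(1/ε). Define h_β(x) = log x − (x − 1) + β(x − 1)²/2 on (0, ∞). Then h_β(x) ≥ 0 for all x ≥ ε. -/
/-
Since `log x ≥ 1 - 1/x`, and `1 - 1/x - (x - 1) = -(x - 1)² / x`, the function `h_β` is
nonnegative wherever `1/x ≤ β/2`; with `β = 8 log(1/ε) ≥ 8 log 2 > 4` this covers `x ≥ 1/2`.
For `ε ≤ x ≤ 1/2` the crude bounds `log x ≥ log ε`, `-(x - 1) ≥ 0` and `(x - 1)² ≥ 1/4` suffice.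
-/

open Real

lemma log_sub_sub_add_mul_sq_nonneg {x c : ℝ} (hx : 0 < x) (hc : x⁻¹ ≤ c) :
    0 ≤ log x - (x - 1) + c * (x - 1) ^ 2 := by
  have hlog : 1 - x⁻¹ ≤ log x := one_sub_inv_le_log_of_pos hx
  have hsplit : 1 - x⁻¹ - (x - 1) + c * (x - 1) ^ 2 = (c - x⁻¹) * (x - 1) ^ 2 := by
    field_simp
    ring
  have : 0 ≤ (c - x⁻¹) * (x - 1) ^ 2 := mul_nonneg (sub_nonneg.mpr hc) (sq_nonneg _)
  linarith

/-- Lemma `lm_bound_error_variance_Pati2014`: let `ε ∈ (0, 1/2)` and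
`β = 8 log(1/ε)`; then `h_β(x) = log x - (x-1) + β(x-1)²/2 ≥ 0` for all `x ≥ ε`. -/
theorem statement_14 (ε : ℝ) (hε0 : 0 < ε) (hε : ε < 1 / 2) (x : ℝ) (hx : ε ≤ x) :
    0 ≤ Real.log x - (x - 1) + 8 * Real.log (1 / ε) * (x - 1) ^ 2 / 2 := by
  have hx0 : 0 < x := hε0.trans_le hx
  have hL : 1 / 2 ≤ log (1 / ε) := calc
    (1 / 2 : ℝ) ≤ log 2 := by linarith [log_two_gt_d9]
    _ ≤ log (1 / ε) := log_le_log two_pos (by rw [le_div_iff₀ hε0]; linarith)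
  rcases le_total (1 / 2) x with hx_large | hx_small
  · have hinv : x⁻¹ ≤ 4 * log (1 / ε) := calc
      x⁻¹ ≤ 2 := by rw [inv_le_comm₀ hx0 two_pos]; linarith
      _ ≤ 4 * log (1 / ε) := by linarith
    have := log_sub_sub_add_mul_sq_nonneg hx0 hinv
    linarith
  · have hlog : -log (1 / ε) ≤ log x := by
      rw [one_div, log_inv, neg_neg]
      exact log_le_log hε0 hx
    have hsq : 1 / 4 ≤ (x - 1) ^ 2 := by nlinarith
    nlinarith
end
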